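/- Soundness of E_ftc-cm: for every field F, all axioms of E_ftc-cm are valid in the common meadow enlargement of F; that is, for all x, y, z, u, v ∈ Option F: (x+y)+z = x+(y+z); x+y = y+x; x+0 = x; x+(-x) = 0·x; x·(y·z) = (x·y)·z; x·y = y·x; 1·x = x; x·(y+z) = (x·y)+(x·z); -(-x) = x; 0·(x+y) = 0·(x·y); x+⊥ = ⊥; x = x/1; -(x/y) = (-x)/y; (x/y)·(u/v) = (x·u)/(y·v); (x/y)+(u/v) = ((x·v)+(y·u))/(y·v); x/(u/v) = x·((v·v)/(u·v)); x/(y+0·z) = (x+0·z)/y; and ⊥ = 1/0. -/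
import Mathlib


universe u

namespace CommonMeadow

/-- Addition on the common meadow enlargement `Option F` of a field `F`. -/
def cmAdd {F : Type u} [Field F] : Option F → Option F → Option F
  | some a, some b => some (a + b)
  | _, _ => none

/-- Multiplication on the common meadow enlargement `Option F` of a field `F`. -/
def cmMul {F : Type u} [Field F] : Option F → Option F → Option F
  | some a, some b => some (a * b)
  | _, _ => none

/-- Negation on the common meadow enlargement `Option F` of a field `F`. -/
def cmNeg {F : Type u} [Field F] : Option F → Option F
  | some a => some (-a)
  | none => none

open Classical in
/-- Division on the common meadow enlargement `Option F` of a field `F`: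
`x / y = ⊥` if `x = ⊥` or `y = ⊥` or `y = 0`, and `x / y = x * y⁻¹` otherwise. -/
noncomputable def cmDiv {F : Type u} [Field F] : Option F → Option F → Option F
  | some a, some b => if b = 0 then none else some (a * b⁻¹)
  | _, _ => none

end CommonMeadow

open CommonMeadow in
/-- Soundness of `E_ftc-cm`: all eighteen axioms are valid in the common meadow
enlargement `Option F` of every field `F` (here `⊥` is `none`, and `0`, `1` are
`some 0`, `some 1`). -/
theorem soundness_ftc_cm (F : Type u) [Field F] (x y z u v : Option F) :
    cmAdd (cmAdd x y) z = cmAdd x (cmAdd y z) ∧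
    cmAdd x y = cmAdd y x ∧
    cmAdd x (some 0) = x ∧
    cmAdd x (cmNeg x) = cmMul (some 0) x ∧
    cmMul x (cmMul y z) = cmMul (cmMul x y) z ∧
    cmMul x y = cmMul y x ∧
    cmMul (some 1) x = x ∧
    cmMul x (cmAdd y z) = cmAdd (cmMul x y) (cmMul x z) ∧
    cmNeg (cmNeg x) = x ∧
    cmMul (some 0) (cmAdd x y) = cmMul (some 0) (cmMul x y) ∧
    cmAdd x none = none ∧
    x = cmDiv x (some 1) ∧
    cmNeg (cmDiv x y) = cmDiv (cmNeg x) y ∧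
    cmMul (cmDiv x y) (cmDiv u v) = cmDiv (cmMul x u) (cmMul y v) ∧
    cmAdd (cmDiv x y) (cmDiv u v) = cmDiv (cmAdd (cmMul x v) (cmMul y u)) (cmMul y v) ∧
    cmDiv x (cmDiv u v) = cmMul x (cmDiv (cmMul v v) (cmMul u v)) ∧
    cmDiv x (cmAdd y (cmMul (some 0) z)) = cmDiv (cmAdd x (cmMul (some 0) z)) y ∧
    (none : Option F) = cmDiv (some 1) (some 0) := by
  refine ⟨?_, ?_, ?_, ?_, ?_, ?_, ?_, ?_, ?_, ?_, ?_, ?_, ?_, ?_, ?_, ?_, ?_, ?_⟩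
  · obtain _|x := x <;> obtain _|y := y <;> obtain _|z := z <;>
      simp [cmAdd, add_assoc]
  · obtain _|x := x <;> obtain _|y := y <;> simp [cmAdd, add_comm]
  · obtain _|x := x <;> simp [cmAdd]
  · obtain _|x := x <;> simp [cmAdd, cmNeg, cmMul]
  · obtain _|x := x <;> obtain _|y := y <;> obtain _|z := z <;>
      simp [cmMul, mul_assoc]
  · obtain _|x := x <;> obtain _|y := y <;> simp [cmMul, mul_comm]
  · obtain _|x := x <;> simp [cmMul]
  · obtain _|x := x <;> obtain _|y := y <;> obtain _|z := z <;>
      simp [cmMul, cmAdd, mul_add]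
  · obtain _|x := x <;> simp [cmNeg]
  · obtain _|x := x <;> obtain _|y := y <;> simp [cmMul, cmAdd]
  · obtain _|x := x <;> simp [cmAdd]
  · obtain _|x := x <;> simp [cmDiv]
  · obtain _|x := x <;> obtain _|y := y <;> simp [cmDiv, cmNeg] <;>
      split_ifs <;> simp [cmNeg, neg_mul]
  · obtain _|x := x <;> obtain _|y := y <;> obtain _|u := u <;> obtain _|v := v <;>
      simp [cmDiv, cmMul] <;> split_ifs <;>
      simp_all [cmMul, mul_eq_zero, mul_inv, cmDiv] <;> ring
  · obtain _|x := x <;> obtain _|y := y <;> obtain _|u := u <;> obtain _|v := v <;>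
      simp [cmDiv, cmAdd, cmMul] <;> split_ifs <;>
      simp_all [cmAdd, cmMul, mul_eq_zero, cmDiv] <;> field_simp <;> ring
  · obtain _|x := x <;> obtain _|u := u <;> obtain _|v := v <;>
      simp [cmDiv, cmMul] <;> split_ifs <;>
      simp_all [cmMul, cmDiv, mul_eq_zero] <;> field_simp <;> ring_nf <;> tauto
  · obtain _|x := x <;> obtain _|y := y <;> obtain _|z := z <;>
      simp [cmDiv, cmAdd, cmMul] <;> split_ifs <;> simp_all [cmDiv]
  · simp [cmDiv]
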